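/- An inverse semigroup with finitely many idempotents whose maximal subgroups are all locally finite has the Howson property. -/

import Mathlib

inductive InvGen {S : Type*} [Mul S] [Inv S] (X : Set S) : S → Prop
  | base {x : S} : x ∈ X → InvGen X x
  | mul {a b : S} : InvGen X a → InvGen X b → InvGen X (a * b)
  | inv {a : S} : InvGen X a → InvGen X a⁻¹

def IsInvSub {S : Type*} [Mul S] [Inv S] (T : Set S) : Prop :=
  (∀ a ∈ T, ∀ b ∈ T, a * b ∈ T) ∧ ∀ a ∈ T, a⁻¹ ∈ T

def InvFG {S : Type*} [Mul S] [Inv S] (T : Set S) : Prop :=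
  ∃ X : Finset S, ↑X ⊆ T ∧ T = {s | InvGen (↑X : Set S) s}

def Howson (S : Type*) [Mul S] [Inv S] : Prop :=
  ∀ U V : Set S, IsInvSub U → IsInvSub V → InvFG U → InvFG V → InvFG (U ∩ V)
class InverseSemigroup (S : Type*) extends Semigroup S, Inv S where
  mul_inv_mul : ∀ a : S, a * a⁻¹ * a = a
  inv_invol : ∀ a : S, a⁻¹⁻¹ = a
  idem_comm : ∀ a b : S, (a * a⁻¹) * (b * b⁻¹) = (b * b⁻¹) * (a * a⁻¹)

/-!
A finitely generated inverse subsemigroup `U` of `S` is finite, so the intersection of two of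
them is finite, hence finitely generated. To see that `U` is finite, sort its elements by their
range and domain idempotents `(s * s⁻¹, s⁻¹ * s)`: there are finitely many pairs, and the
fibre over `(e, f)` is a right translate of the local group `K_e = U ∩ H_e`. By a Schreier
argument, `K_e` is generated by the finitely many elements `r f * y * (r f')⁻¹`, where `y` runs
over the generators of `U` and `r f` is a fixed element of `U` with range `e` and domain `f`.
So `K_e` is a finitely generated subgroup of the maximal subgroup `H_e`, and therefore finite.
-/

open scoped Pointwise

section Generation

variable {S : Type*} [Mul S] [Inv S] {T X : Set S} {s : S}

theorem IsInvSub.inter {U V : Set S} (hU : IsInvSub U) (hV : IsInvSub V) : IsInvSub (U ∩ V) :=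
  ⟨fun a ha b hb => ⟨hU.1 a ha.1 b hb.1, hV.1 a ha.2 b hb.2⟩,
    fun a ha => ⟨hU.2 a ha.1, hV.2 a ha.2⟩⟩

def IsInvSub.toSubsemigroup (hT : IsInvSub T) : Subsemigroup S where
  carrier := T
  mul_mem' ha hb := hT.1 _ ha _ hb

theorem IsInvSub.closure_subset (hT : IsInvSub T) (hXT : X ⊆ T) :
    (Subsemigroup.closure X : Set S) ⊆ T :=
  Subsemigroup.closure_le (S := hT.toSubsemigroup) |>.2 hXT

theorem IsInvSub.invGen_mem (hT : IsInvSub T) (hXT : X ⊆ T) (h : InvGen X s) : s ∈ T := by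
  induction h with
  | base hx => exact hXT hx
  | mul _ _ iha ihb => exact hT.1 _ iha _ ihb
  | inv _ ih => exact hT.2 _ ih

theorem invGen_of_mem_closure (h : s ∈ Subsemigroup.closure X) : InvGen X s := by
  induction h using Subsemigroup.closure_induction with
  | mem _ hx => exact .base hx
  | mul _ _ _ _ hx hy => exact .mul hx hy

theorem InvFG.of_subset_closure {G : Set S} (hT : IsInvSub T) (hG : G.Finite) (hGT : G ⊆ T)
    (hTG : T ⊆ Subsemigroup.closure G) : InvFG T := by
  refine ⟨hG.toFinset, by simpa using hGT, ?_⟩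
  ext s
  simp only [Set.Finite.coe_toFinset, Set.mem_ofPred_eq]
  exact ⟨fun hs => invGen_of_mem_closure (hTG hs), hT.invGen_mem hGT⟩

end Generation


namespace InverseSemigroup

variable {S : Type*} [InverseSemigroup S]

instance : InvolutiveInv S where
  inv_inv := inv_invol

theorem inv_mul_inv (a : S) : a⁻¹ * a * a⁻¹ = a⁻¹ := by
  simpa using mul_inv_mul a⁻¹

theorem isIdempotentElem_mul_inv (a : S) : IsIdempotentElem (a * a⁻¹) := by
  rw [IsIdempotentElem, ← mul_assoc, mul_inv_mul]

theorem isIdempotentElem_inv_mul (a : S) : IsIdempotentElem (a⁻¹ * a) := by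
  simpa using isIdempotentElem_mul_inv a⁻¹

theorem inv_eq_self_of_isIdempotentElem {e : S} (he : IsIdempotentElem e) : e⁻¹ = e := by
  have hp := isIdempotentElem_mul_inv e
  have hq := isIdempotentElem_inv_mul e
  have hpq : e * e⁻¹ * (e⁻¹ * e) = e⁻¹ * e * (e * e⁻¹) := by
    simpa using idem_comm e e⁻¹
  have hqp : e⁻¹ = e⁻¹ * e * (e * e⁻¹) :=
    calc e⁻¹ = e⁻¹ * (e * e) * e⁻¹ := by rw [he.eq, inv_mul_inv]
      _ = e⁻¹ * e * (e * e⁻¹) := by simp only [mul_assoc]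
  -- `e⁻¹ = q * p = p * q` for the commuting idempotents `p`, `q`, so `e⁻¹` is idempotent.
  set p := e * e⁻¹
  set q := e⁻¹ * e
  have hinv : IsIdempotentElem e⁻¹ :=
    calc e⁻¹ * e⁻¹ = q * (p * q) * p := by rw [hqp]; simp only [mul_assoc]
      _ = q * q * (p * p) := by rw [hpq]; simp only [mul_assoc]
      _ = e⁻¹ := by rw [hq.eq, hp.eq, hqp]
  calc e⁻¹ = p * q := hqp.trans hpq.symm
    _ = e * (e⁻¹ * e⁻¹) * e := by simp only [p, q, mul_assoc]
    _ = e := by rw [hinv.eq, mul_inv_mul]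

theorem commute_of_isIdempotentElem {e f : S} (he : IsIdempotentElem e)
    (hf : IsIdempotentElem f) : Commute e f := by
  have := idem_comm e f
  rwa [inv_eq_self_of_isIdempotentElem he, inv_eq_self_of_isIdempotentElem hf, he.eq,
    hf.eq] at this

theorem inv_eq_of_mul_mul_eq {x z : S} (hxzx : x * z * x = x) (hzxz : z * x * z = z) :
    x⁻¹ = z := by
  have hxz : IsIdempotentElem (x * z) := by
    rw [IsIdempotentElem, ← mul_assoc, hxzx]
  have hzx : IsIdempotentElem (z * x) := by
    rw [IsIdempotentElem, ← mul_assoc, hzxz]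
  have hc₁ := (commute_of_isIdempotentElem (isIdempotentElem_inv_mul x) hzx).eq
  have hc₂ := (commute_of_isIdempotentElem (isIdempotentElem_mul_inv x) hxz).eq
  calc x⁻¹ = x⁻¹ * (x * z * x) * x⁻¹ := by rw [hxzx, inv_mul_inv]
    _ = x⁻¹ * x * (z * x) * x⁻¹ := by simp only [mul_assoc]
    _ = z * (x * x⁻¹ * x) * x⁻¹ := by rw [hc₁]; simp only [mul_assoc]
    _ = z * x * z * (x * x⁻¹) := by rw [mul_inv_mul, hzxz, mul_assoc]
    _ = z * (x * x⁻¹ * (x * z)) := by rw [hc₂]; simp only [mul_assoc]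
    _ = z * (x * x⁻¹ * x) * z := by simp only [mul_assoc]
    _ = z := by rw [mul_inv_mul, hzxz]

protected theorem mul_inv_rev (a b : S) : (a * b)⁻¹ = b⁻¹ * a⁻¹ := by
  have hc := (commute_of_isIdempotentElem (isIdempotentElem_mul_inv b)
    (isIdempotentElem_inv_mul a)).eq
  apply inv_eq_of_mul_mul_eq
  · calc a * b * (b⁻¹ * a⁻¹) * (a * b) = a * (b * b⁻¹ * (a⁻¹ * a)) * b := by
          simp only [mul_assoc]
      _ = a * a⁻¹ * a * (b * b⁻¹ * b) := by rw [hc]; simp only [mul_assoc]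
      _ = a * b := by rw [mul_inv_mul, mul_inv_mul]
  · calc b⁻¹ * a⁻¹ * (a * b) * (b⁻¹ * a⁻¹)
          = b⁻¹ * (a⁻¹ * a * (b * b⁻¹)) * a⁻¹ := by simp only [mul_assoc]
      _ = b⁻¹ * b * b⁻¹ * (a⁻¹ * a * a⁻¹) := by rw [← hc]; simp only [mul_assoc]
      _ = b⁻¹ * a⁻¹ := by rw [inv_mul_inv, inv_mul_inv]

theorem inv_mem_closure {Y : Set S} (hY : Y⁻¹ ⊆ Y) {s : S} (h : s ∈ Subsemigroup.closure Y) :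
    s⁻¹ ∈ Subsemigroup.closure Y := by
  induction h using Subsemigroup.closure_induction with
  | mem y hy => exact Subsemigroup.subset_closure (hY (by simpa using hy))
  | mul _ _ _ _ ha hb => rw [InverseSemigroup.mul_inv_rev]; exact mul_mem hb ha

theorem mem_closure_of_invGen {X : Set S} {s : S} (h : InvGen X s) :
    s ∈ Subsemigroup.closure (X ∪ X⁻¹) := by
  induction h with
  | base hx => exact Subsemigroup.subset_closure (Or.inl hx)
  | mul _ _ ha hb => exact mul_mem ha hb
  | inv _ ih => exact inv_mem_closure (by rw [Set.union_inv, inv_inv, Set.union_comm]) ih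

theorem mul_mul_inv_eq (a b : S) : a * b * (a * b)⁻¹ = a * (b * b⁻¹) * a⁻¹ := by
  rw [InverseSemigroup.mul_inv_rev]; simp only [mul_assoc]

theorem inv_mul_mul_eq (a b : S) : (a * b)⁻¹ * (a * b) = b⁻¹ * (a⁻¹ * a) * b := by
  rw [InverseSemigroup.mul_inv_rev]; simp only [mul_assoc]

theorem mul_inv_mul_mul_mul_inv (a b : S) :
    a * a⁻¹ * (a * b * (a * b)⁻¹) = a * b * (a * b)⁻¹ := by
  rw [← mul_assoc, ← mul_assoc, mul_inv_mul]

theorem mul_mul_inv_of_inv_mul_eq {a b : S} (h : a⁻¹ * a = b * b⁻¹) :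
    a * b * (a * b)⁻¹ = a * a⁻¹ := by
  rw [mul_mul_inv_eq, ← h, ← mul_assoc, mul_inv_mul]

theorem inv_mul_mul_of_inv_mul_eq {a b : S} (h : a⁻¹ * a = b * b⁻¹) :
    (a * b)⁻¹ * (a * b) = b⁻¹ * b := by
  rw [inv_mul_mul_eq, h, ← mul_assoc, inv_mul_inv]

theorem mul_mul_inv_eq_of_mul_mul_mul_inv_eq {q u v e : S} (hq : q * q⁻¹ = e)
    (h : q * u * v * (q * u * v)⁻¹ = e) : q * u * (q * u)⁻¹ = e := by
  have he : IsIdempotentElem e := hq ▸ isIdempotentElem_mul_inv q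
  have hle : e * (q * u * (q * u)⁻¹) = q * u * (q * u)⁻¹ := by
    rw [← hq, ← mul_assoc, ← mul_assoc, mul_inv_mul]
  have hge : q * u * (q * u)⁻¹ * e = e := by
    rw [← h]; exact mul_inv_mul_mul_mul_inv (q * u) v
  calc q * u * (q * u)⁻¹ = e * (q * u * (q * u)⁻¹) := hle.symm
    _ = q * u * (q * u)⁻¹ * e :=
      (commute_of_isIdempotentElem he (isIdempotentElem_mul_inv _)).eq
    _ = e := hge

/-- The elements of `U` with range `e` and domain `f`, i.e. `U ∩ R_e ∩ L_f`. -/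
def fiber (U : Set S) (e f : S) : Set S :=
  {s | s ∈ U ∧ s * s⁻¹ = e ∧ s⁻¹ * s = f}

section Fiber

variable {U : Set S} {a b e f g : S}

theorem mul_mem_fiber (hU : IsInvSub U) (ha : a ∈ fiber U e f) (hb : b ∈ fiber U f g) :
    a * b ∈ fiber U e g := by
  have hab : a⁻¹ * a = b * b⁻¹ := ha.2.2.trans hb.2.1.symm
  exact ⟨hU.1 _ ha.1 _ hb.1, (mul_mul_inv_of_inv_mul_eq hab).trans ha.2.1,
    (inv_mul_mul_of_inv_mul_eq hab).trans hb.2.2⟩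

theorem inv_mem_fiber (hU : IsInvSub U) (ha : a ∈ fiber U e f) : a⁻¹ ∈ fiber U f e :=
  ⟨hU.2 _ ha.1, by simpa using ha.2.2, by simpa using ha.2.1⟩

theorem self_mem_fiber (he : IsIdempotentElem e) (heU : e ∈ U) : e ∈ fiber U e e := by
  refine ⟨heU, ?_, ?_⟩ <;> rw [inv_eq_self_of_isIdempotentElem he, he.eq]

theorem isInvSub_fiber_self (hU : IsInvSub U) : IsInvSub (fiber U e e) :=
  ⟨fun _ ha _ hb => mul_mem_fiber hU ha hb, fun _ ha => inv_mem_fiber hU ha⟩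

theorem fiber_subset_image_mul (hU : IsInvSub U) (ha : a ∈ fiber U e f) :
    fiber U e f ⊆ (· * a) '' fiber U e e := by
  intro s hs
  refine ⟨s * a⁻¹, mul_mem_fiber hU hs (inv_mem_fiber hU ha), ?_⟩
  show s * a⁻¹ * a = s
  rw [mul_assoc, ha.2.2, ← hs.2.2, ← mul_assoc, mul_inv_mul]

end Fiber

-- `a * y = (a * q⁻¹) * (q * y)` with `a * q⁻¹` in the group `fiber U e e`.
theorem mul_mul_inv_eq_of_mem_fiber {U : Set S} {q a y e f : S} (hU : IsInvSub U)
    (hq : q ∈ fiber U e f) (ha : a ∈ fiber U e f) (hqy : q * y * (q * y)⁻¹ = e) :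
    a * y * (a * y)⁻¹ = e := by
  have hk : a * q⁻¹ ∈ fiber U e e := mul_mem_fiber hU ha (inv_mem_fiber hU hq)
  have hay : a * y = a * q⁻¹ * (q * y) := by
    rw [← mul_assoc, mul_assoc a, hq.2.2, ← ha.2.2, ← mul_assoc, mul_inv_mul]
  rw [hay, mul_mul_inv_of_inv_mul_eq (hk.2.2.trans hqy.symm), hk.2.1]

section Schreier

variable {U Y : Set S} {e : S} {r : S → S}

def IsFiberRep (U : Set S) (e : S) (r : S → S) : Prop :=
  r e = e ∧ ∀ f, (fiber U e f).Nonempty → r f ∈ fiber U e f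

/-- With `r f` a representative of `fiber U e f`, these are the Schreier generators
`r f * y * (r f')⁻¹` of the group `fiber U e e`, together with its identity `e`. -/
def schreierGens (U Y : Set S) (e : S) (r : S → S) : Set S :=
  insert e (fiber U e e ∩ (fun p : S × S × S => r p.1 * p.2.1 * (r p.2.2)⁻¹) ''
    ({f | IsIdempotentElem f} ×ˢ Y ×ˢ {f | IsIdempotentElem f}))

theorem finite_schreierGens (hE : {e : S | IsIdempotentElem e}.Finite) (hY : Y.Finite) :
    (schreierGens U Y e r).Finite :=
  ((hE.prod (hY.prod hE)).image _).inter_of_right _ |>.insert e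

theorem schreierGens_subset_fiber (he : IsIdempotentElem e) (heU : e ∈ U) :
    schreierGens U Y e r ⊆ fiber U e e :=
  Set.insert_subset (self_mem_fiber he heU) Set.inter_subset_left

theorem exists_isFiberRep (heU : e ∈ fiber U e e) : ∃ r, IsFiberRep U e r := by
  have hrep (f : S) : ∃ x, (fiber U e f).Nonempty → x ∈ fiber U e f := by
    by_cases h : (fiber U e f).Nonempty
    exacts [⟨h.some, fun _ => h.some_mem⟩, ⟨e, fun h' => (h h').elim⟩]
  choose r₀ hr₀ using hrep
  classical
  refine ⟨Function.update r₀ e e, by simp, fun f hf => ?_⟩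
  rcases eq_or_ne f e with rfl | hfe
  · simpa using heU
  · simpa [hfe] using hr₀ f hf

theorem schreier_step (hU : IsInvSub U) (hYU : Y ⊆ U) (hr : IsFiberRep U e r) {q y : S}
    (hq : q ∈ U) (hqe : q * q⁻¹ = e) (hy : y ∈ Y) (hqy : q * y * (q * y)⁻¹ = e)
    (hG : q * (r (q⁻¹ * q))⁻¹ ∈ Subsemigroup.closure (schreierGens U Y e r)) :
    q * y * (r ((q * y)⁻¹ * (q * y)))⁻¹ ∈ Subsemigroup.closure (schreierGens U Y e r) := by
  set f := q⁻¹ * q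
  set f' := (q * y)⁻¹ * (q * y)
  have hqf : q ∈ fiber U e f := ⟨hq, hqe, rfl⟩
  have ha := hr.2 f ⟨q, hqf⟩
  have hay : r f * y ∈ fiber U e f' := ⟨hU.1 _ ha.1 _ (hYU hy),
    mul_mul_inv_eq_of_mem_fiber hU hqf ha hqy,
    by rw [inv_mul_mul_eq, ha.2.2]; exact (inv_mul_mul_eq q y).symm⟩
  have hb := hr.2 f' ⟨_, hay⟩
  have hw : r f * y * (r f')⁻¹ ∈ schreierGens U Y e r :=
    Set.mem_insert_of_mem _ ⟨mul_mem_fiber hU hay (inv_mem_fiber hU hb),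
      (f, y, f'), ⟨isIdempotentElem_inv_mul q, hy, isIdempotentElem_inv_mul _⟩, rfl⟩
  have hsplit : q * (r f)⁻¹ * (r f * y * (r f')⁻¹) = q * y * (r f')⁻¹ :=
    calc q * (r f)⁻¹ * (r f * y * (r f')⁻¹) = q * ((r f)⁻¹ * r f) * y * (r f')⁻¹ := by
          simp only [mul_assoc]
      _ = q * y * (r f')⁻¹ := by rw [ha.2.2, ← hqf.2.2, ← mul_assoc, mul_inv_mul]
  rw [← hsplit]
  exact mul_mem hG (Subsemigroup.subset_closure hw)

theorem mul_mul_inv_rep_mem_closure (hU : IsInvSub U) (hYU : Y ⊆ U) (hr : IsFiberRep U e r)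
    {u : S} (hu : u ∈ Subsemigroup.closure Y) :
    ∀ q ∈ U, q * q⁻¹ = e →
      q * (r (q⁻¹ * q))⁻¹ ∈ Subsemigroup.closure (schreierGens U Y e r) →
      q * u * (q * u)⁻¹ = e →
      q * u * (r ((q * u)⁻¹ * (q * u)))⁻¹ ∈
        Subsemigroup.closure (schreierGens U Y e r) := by
  induction hu using Subsemigroup.closure_induction with
  | mem y hy => exact fun q hq hqe hG hqy => schreier_step hU hYU hr hq hqe hy hqy hG
  | mul u v hu _ ihu ihv =>
    intro q hq hqe hG hquv
    rw [← mul_assoc] at hquv ⊢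
    have hqu := mul_mul_inv_eq_of_mul_mul_mul_inv_eq hqe hquv
    exact ihv (q * u) (hU.1 _ hq _ (hU.closure_subset hYU hu)) hqu (ihu q hq hqe hG hqu) hquv

theorem fiber_self_subset_closure (hU : IsInvSub U) (hYU : Y ⊆ U) (hr : IsFiberRep U e r)
    (hUY : U ⊆ Subsemigroup.closure Y) (he : IsIdempotentElem e) (heU : e ∈ U) :
    fiber U e e ⊆ Subsemigroup.closure (schreierGens U Y e r) := by
  intro s hs
  have hinv := inv_eq_self_of_isIdempotentElem he
  have hes : e * s = s := by rw [← hs.2.1, mul_inv_mul]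
  have hse : s * e = s := by rw [← hs.2.2, ← mul_assoc, mul_inv_mul]
  have hee : e * e⁻¹ = e := by rw [hinv, he.eq]
  have hG : e * (r (e⁻¹ * e))⁻¹ ∈ Subsemigroup.closure (schreierGens U Y e r) := by
    rw [hinv, he.eq, hr.1, hinv, he.eq]
    exact Subsemigroup.subset_closure (Set.mem_insert e _)
  have key := mul_mul_inv_rep_mem_closure hU hYU hr (hUY hs.1) e heU hee hG
    (by rw [hes, hs.2.1])
  rwa [hes, hs.2.2, hr.1, hinv, hse] at key

end Schreier

theorem invFG_fiber_self {U Y : Set S} {e : S} (hE : {e : S | IsIdempotentElem e}.Finite)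
    (hU : IsInvSub U) (hY : Y.Finite) (hYU : Y ⊆ U) (hUY : U ⊆ Subsemigroup.closure Y)
    (he : IsIdempotentElem e) (heU : e ∈ U) : InvFG (fiber U e e) := by
  obtain ⟨r, hr⟩ := exists_isFiberRep (self_mem_fiber he heU)
  exact InvFG.of_subset_closure (isInvSub_fiber_self hU) (finite_schreierGens hE hY)
    (schreierGens_subset_fiber he heU) (fiber_self_subset_closure hU hYU hr hUY he heU)

theorem finite_of_finite_fiber_self {U : Set S} (hE : {e : S | IsIdempotentElem e}.Finite)
    (hU : IsInvSub U) (hK : ∀ e, IsIdempotentElem e → e ∈ U → (fiber U e e).Finite) :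
    U.Finite := by
  have hfiber (p : S × S) : (fiber U p.1 p.2).Finite := by
    rcases (fiber U p.1 p.2).eq_empty_or_nonempty with h | ⟨a, ha⟩
    · simp [h]
    have he : IsIdempotentElem p.1 := ha.2.1 ▸ isIdempotentElem_mul_inv a
    have heU : p.1 ∈ U := ha.2.1 ▸ hU.1 _ ha.1 _ (hU.2 _ ha.1)
    exact ((hK _ he heU).image _).subset (fiber_subset_image_mul hU ha)
  refine ((hE.prod hE).biUnion fun p _ => hfiber p).subset fun s hs => ?_
  exact Set.mem_biUnion (x := (s * s⁻¹, s⁻¹ * s))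
    ⟨isIdempotentElem_mul_inv s, isIdempotentElem_inv_mul s⟩ ⟨hs, rfl, rfl⟩

theorem finite_of_invFG (hE : {e : S | e * e = e}.Finite)
    (hlf : ∀ e : S, e * e = e →
      ∀ U : Set S, U ⊆ {s : S | s * s⁻¹ = e ∧ s⁻¹ * s = e} →
        IsInvSub U → InvFG U → U.Finite)
    {U : Set S} (hU : IsInvSub U) (hfg : InvFG U) : U.Finite := by
  obtain ⟨X, hXU, hUX⟩ := hfg
  have hYU : (X ∪ X⁻¹ : Set S) ⊆ U :=
    Set.union_subset hXU fun y hy => by simpa using hU.2 _ (hXU hy)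
  have hUY : U ⊆ Subsemigroup.closure (X ∪ X⁻¹ : Set S) := by
    rw [hUX]; exact fun s => mem_closure_of_invGen
  refine finite_of_finite_fiber_self hE hU fun e he heU => ?_
  exact hlf e he _ (fun s hs => hs.2) (isInvSub_fiber_self hU)
    (invFG_fiber_self hE hU (X.finite_toSet.union X.finite_toSet.inv) hYU hUY he heU)

end InverseSemigroup

theorem stmt_17 {S : Type*} [InverseSemigroup S]
    (hE : {e : S | e * e = e}.Finite)
    (hlf : ∀ e : S, e * e = e →
      ∀ U : Set S, U ⊆ {s : S | s * s⁻¹ = e ∧ s⁻¹ * s = e} →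
        IsInvSub U → InvFG U → U.Finite) :
    Howson S := by
  intro U V hU hV hUfg _
  have hfin : (U ∩ V).Finite :=
    (InverseSemigroup.finite_of_invFG hE hlf hU hUfg).subset Set.inter_subset_left
  exact InvFG.of_subset_closure (hU.inter hV) hfin subset_rfl Subsemigroup.subset_closure
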